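/- arXiv:2406.16986 — 2 statements merged into one kernel-verified Lean document; each statement's English description precedes it below -/
import Mathlib

section
/- Fix η ∈ ℝ, an integer s ≥ 1, p×p real matrices A_j and vectors b_j ∈ ℝ^p indexed by a dataset 𝔻, batches 𝔹_1, …, 𝔹_s ⊆ 𝔻 each of cardinality B, and subsets 𝔹̄_l ⊆ 𝔹_l of cardinality ΔB_l < B. Suppose each per-sample gradient is affine: ∇F^{(l−1,j)}(w) = A_j w + b_j. Define w_0* = w_0, and for 1 ≤ l ≤ s: w_l = w_{l−1} − (η/B)·Σ_{j∈𝔹_l} (A_j w_{l−1} + b_j) and w_l* = w_{l−1}* − (η/(B−ΔB_l))·Σ_{j∈𝔹_l∖𝔹̄_l} (A_j w_{l−1}* + b_j). Then Δw_l := w_l* − w_l satisfies, for every 1 ≤ l ≤ s, the exact recursion Δw_l = G(l) + H(l)·Δw_{l−1}, where G(l) = (η/B)·( (B/(B−ΔB_l))·Σ_{j∈𝔹̄_l} (A_j w_{l−1} + b_j) ) − (η/B)·( (ΔB_l/(B−ΔB_l))·Σ_{j∈𝔹_l} (A_j w_{l−1} + b_j) ) and H(l) = I − (η/(B−ΔB_l))·Σ_{j∈𝔹_l∖𝔹̄_l}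 A_j. -/
open Matrix

lemma sum_mulVec_add_eq_add_sum_mulVec_sub {p : ℕ} {ι : Type*} (S : Finset ι)
    (A : ι → Matrix (Fin p) (Fin p) ℝ) (b : ι → Fin p → ℝ) (x y : Fin p → ℝ) :
    ∑ j ∈ S, (A j *ᵥ y + b j) = ∑ j ∈ S, (A j *ᵥ x + b j) + (∑ j ∈ S, A j) *ᵥ (y - x) := by
  rw [Matrix.sum_mulVec, ← Finset.sum_add_distrib]
  refine Finset.sum_congr rfl fun j _ => ?_
  rw [Matrix.mulVec_sub]
  abel

/-- The subtracted term is `G(l)` of Equation (7), with `X` the retained and `Y` the removed part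
of a batch of size `B`. -/
lemma smul_retained_eq_smul_full_sub_correction {E : Type*} [AddCommGroup E] [Module ℝ E]
    {B m : ℝ} (hB : B ≠ 0) (hBm : B - m ≠ 0) (η : ℝ) (X Y : E) :
    (η / (B - m)) • X =
      (η / B) • (X + Y) - ((η / B) • ((B / (B - m)) • Y) - (η / B) • ((m / (B - m)) • (X + Y))) := by
  match_scalars <;> field_simp <;> ring

theorem affine_gradient_exact_recursion_general {p : ℕ} {ι : Type*} [DecidableEq ι]
    (η : ℝ) (s : ℕ)
    (A : ι → Matrix (Fin p) (Fin p) ℝ) (b : ι → Fin p → ℝ)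
    (𝔹 𝔹bar : ℕ → Finset ι) (B : ℕ)
    (hsub : ∀ l, 1 ≤ l → l ≤ s → 𝔹bar l ⊆ 𝔹 l)
    (hlt : ∀ l, 1 ≤ l → l ≤ s → (𝔹bar l).card < B)
    (w wstar : ℕ → Fin p → ℝ)
    (hw : ∀ l, 1 ≤ l → l ≤ s →
      w l = w (l - 1) - (η / (B : ℝ)) • ∑ j ∈ 𝔹 l, (A j *ᵥ w (l - 1) + b j))
    (hwstar : ∀ l, 1 ≤ l → l ≤ s →
      wstar l = wstar (l - 1) - (η / ((B : ℝ) - ((𝔹bar l).card : ℝ))) •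
        ∑ j ∈ 𝔹 l \ 𝔹bar l, (A j *ᵥ wstar (l - 1) + b j)) :
    ∀ l, 1 ≤ l → l ≤ s →
      wstar l - w l =
        ((η / (B : ℝ)) • (((B : ℝ) / ((B : ℝ) - ((𝔹bar l).card : ℝ))) •
            ∑ j ∈ 𝔹bar l, (A j *ᵥ w (l - 1) + b j))
          - (η / (B : ℝ)) • ((((𝔹bar l).card : ℝ) / ((B : ℝ) - ((𝔹bar l).card : ℝ))) •
            ∑ j ∈ 𝔹 l, (A j *ᵥ w (l - 1) + b j)))
        + ((1 : Matrix (Fin p) (Fin p) ℝ)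
            - (η / ((B : ℝ) - ((𝔹bar l).card : ℝ))) • ∑ j ∈ 𝔹 l \ 𝔹bar l, A j) *ᵥ
          (wstar (l - 1) - w (l - 1)) := by
  intro l hl₁ hls
  have hmB : ((𝔹bar l).card : ℝ) < B := by exact_mod_cast hlt l hl₁ hls
  have hB : (B : ℝ) ≠ 0 := ((Nat.cast_nonneg _).trans_lt hmB).ne'
  have hBm : (B : ℝ) - (𝔹bar l).card ≠ 0 := sub_ne_zero.mpr hmB.ne'
  rw [hw l hl₁ hls, hwstar l hl₁ hls,
    sum_mulVec_add_eq_add_sum_mulVec_sub _ A b (w (l - 1)), smul_add,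
    smul_retained_eq_smul_full_sub_correction hB hBm,
    Finset.sum_sdiff (hsub l hl₁ hls), Matrix.sub_mulVec, Matrix.one_mulVec, Matrix.smul_mulVec]
  abel

/-- For affine per-sample gradients `∇F^{(l-1,j)}(w) = A_j w + b_j`, the difference
`Δw_l = w_l* - w_l` between the retrained and original SGD iterates satisfies the exact
recursion `Δw_l = G(l) + H(l)·Δw_{l-1}` of Equations (6)–(8). -/
theorem affine_gradient_exact_recursion {p : ℕ} {ι : Type*} [DecidableEq ι]
    (η : ℝ) (s : ℕ) (hs : 1 ≤ s)
    (A : ι → Matrix (Fin p) (Fin p) ℝ) (b : ι → Fin p → ℝ)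
    (𝔹 𝔹bar : ℕ → Finset ι) (B : ℕ)
    (hcard : ∀ l, 1 ≤ l → l ≤ s → (𝔹 l).card = B)
    (hsub : ∀ l, 1 ≤ l → l ≤ s → 𝔹bar l ⊆ 𝔹 l)
    (hlt : ∀ l, 1 ≤ l → l ≤ s → (𝔹bar l).card < B)
    (w wstar : ℕ → Fin p → ℝ)
    (h0 : wstar 0 = w 0)
    (hw : ∀ l, 1 ≤ l → l ≤ s →
      w l = w (l - 1) - (η / (B : ℝ)) • ∑ j ∈ 𝔹 l, (A j *ᵥ w (l - 1) + b j))
    (hwstar : ∀ l, 1 ≤ l → l ≤ s →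
      wstar l = wstar (l - 1) - (η / ((B : ℝ) - ((𝔹bar l).card : ℝ))) •
        ∑ j ∈ 𝔹 l \ 𝔹bar l, (A j *ᵥ wstar (l - 1) + b j)) :
    ∀ l, 1 ≤ l → l ≤ s →
      wstar l - w l =
        ((η / (B : ℝ)) • (((B : ℝ) / ((B : ℝ) - ((𝔹bar l).card : ℝ))) •
            ∑ j ∈ 𝔹bar l, (A j *ᵥ w (l - 1) + b j))
          - (η / (B : ℝ)) • ((((𝔹bar l).card : ℝ) / ((B : ℝ) - ((𝔹bar l).card : ℝ))) •
            ∑ j ∈ 𝔹 l, (A j *ᵥ w (l - 1) + b j)))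
        + ((1 : Matrix (Fin p) (Fin p) ℝ)
            - (η / ((B : ℝ) - ((𝔹bar l).card : ℝ))) • ∑ j ∈ 𝔹 l \ 𝔹bar l, A j) *ᵥ
          (wstar (l - 1) - w (l - 1)) :=
  affine_gradient_exact_recursion_general η s A b 𝔹 𝔹bar B hsub hlt w wstar hw hwstar
end

section
/- Let r ∈ [0,1), M ≥ 0, integers s ≥ k ≥ 1, and in ℝ^p let H_1, …, H_s be linear maps with operator norm ‖H_l‖ ≤ r, G_1, …, G_s ∈ ℝ^p with ‖G_l‖ ≤ M for all l, and let (Δw_l)_{l=0}^{s} satisfy Δw_0 = 0 and Δw_l = G_l + H_l(Δw_{l−1}) for 1 ≤ l ≤ s. Then the error of the k-term Mini-Unlearning approximation satisfies ‖Δw_s − (G_s + Σ_{j=2}^{k} (H_s ∘ ⋯ ∘ H_{s−j+2})(G_{s−j+1}))‖ ≤ r^k · M·(1 − r^{s−k})/(1 − r) ≤ M·r^k/(1 − r). -/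
/-- `compH H s m` is the composition `H s ∘ H (s-1) ∘ ⋯ ∘ H (s-m+1)` of `m` maps
(the empty composition, `m = 0`, is the identity). -/
noncomputable def compH {p : ℕ}
    (H : ℕ → (EuclideanSpace ℝ (Fin p) →L[ℝ] EuclideanSpace ℝ (Fin p))) (s : ℕ) :
    ℕ → (EuclideanSpace ℝ (Fin p) →L[ℝ] EuclideanSpace ℝ (Fin p))
  | 0 => ContinuousLinearMap.id ℝ _
  | (m + 1) => (compH H s m).comp (H (s - m))

lemma compH_norm {p : ℕ} (r : ℝ) (hr0 : 0 ≤ r) (s : ℕ)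
    (H : ℕ → (EuclideanSpace ℝ (Fin p) →L[ℝ] EuclideanSpace ℝ (Fin p)))
    (hH : ∀ l, 1 ≤ l → l ≤ s → ‖H l‖ ≤ r) :
    ∀ m, m ≤ s → ‖compH H s m‖ ≤ r ^ m := by
  intro m
  induction m with
  | zero =>
      intro _
      simp only [compH, pow_zero]
      exact ContinuousLinearMap.norm_id_le
  | succ n ih =>
    intro hns
    have h1 : n ≤ s := Nat.le_of_succ_le hns
    calc ‖(compH H s n).comp (H (s - n))‖ ≤ ‖compH H s n‖ * ‖H (s - n)‖ :=
          ContinuousLinearMap.opNorm_comp_le _ _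
      _ ≤ r ^ n * r := by
          apply mul_le_mul (ih h1) (hH _ (by omega) (by omega)) (norm_nonneg _)
          exact pow_nonneg hr0 n
      _ = r ^ (n + 1) := (pow_succ r n).symm

/-- Quantitative error of the `k`-term Mini-Unlearning approximation: with `Δw_0 = 0`,
`Δw_l = G_l + H_l (Δw_{l-1})`, `‖H_l‖ ≤ r < 1` and `‖G_l‖ ≤ M`, the truncation error is at
most `r^k M (1 - r^{s-k})/(1 - r) ≤ M r^k/(1 - r)`. -/
theorem mini_unlearning_quantitative_error {p : ℕ} (r M : ℝ) (hr0 : 0 ≤ r) (hr1 : r < 1)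
    (hM : 0 ≤ M) (s k : ℕ) (hk1 : 1 ≤ k) (hks : k ≤ s)
    (H : ℕ → (EuclideanSpace ℝ (Fin p) →L[ℝ] EuclideanSpace ℝ (Fin p)))
    (G Δw : ℕ → EuclideanSpace ℝ (Fin p))
    (hH : ∀ l, 1 ≤ l → l ≤ s → ‖H l‖ ≤ r)
    (hG : ∀ l, 1 ≤ l → l ≤ s → ‖G l‖ ≤ M)
    (h0 : Δw 0 = 0)
    (hrec : ∀ l, 1 ≤ l → l ≤ s → Δw l = G l + H l (Δw (l - 1))) :
    ‖Δw s - (G s + ∑ j ∈ Finset.Icc 2 k, (compH H s (j - 1)) (G (s - j + 1)))‖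
        ≤ r ^ k * (M * (1 - r ^ (s - k)) / (1 - r)) ∧
      r ^ k * (M * (1 - r ^ (s - k)) / (1 - r)) ≤ M * r ^ k / (1 - r) := by
  have h1r : (0:ℝ) < 1 - r := by linarith
  -- bound on ‖Δw l‖
  have hbound : ∀ l, l ≤ s → ‖Δw l‖ ≤ M * (1 - r ^ l) / (1 - r) := by
    intro l
    induction l with
    | zero => intro _; simp [h0]
    | succ n ih =>
      intro hns
      have hn : n ≤ s := Nat.le_of_succ_le hns
      rw [hrec (n+1) (by omega) hns]
      have h1 : ‖G (n+1) + H (n+1) (Δw ((n+1) - 1))‖ ≤ M + r * (M * (1 - r ^ n) / (1 - r)) := by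
        refine le_trans (norm_add_le _ _) ?_
        gcongr
        · exact hG _ (by omega) hns
        · simp only [Nat.add_sub_cancel]
          calc ‖H (n+1) (Δw n)‖ ≤ ‖H (n+1)‖ * ‖Δw n‖ := (H (n+1)).le_opNorm _
            _ ≤ r * (M * (1 - r ^ n) / (1 - r)) := by
                apply mul_le_mul (hH _ (by omega) hns) (ih hn) (norm_nonneg _) hr0
      refine h1.trans (le_of_eq ?_)
      field_simp
      ring
  -- key identity
  have hkey : ∀ m, 1 ≤ m → m ≤ s →
      Δw s = G s + ∑ j ∈ Finset.Icc 2 m, (compH H s (j - 1)) (G (s - j + 1))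
        + (compH H s m) (Δw (s - m)) := by
    intro m
    induction m with
    | zero => intro h; omega
    | succ n ih =>
      intro _ hns
      rcases Nat.eq_zero_or_pos n with hn0 | hn1
      · subst hn0
        simp only [Finset.Icc_self, Finset.Icc_eq_empty_of_lt (by norm_num : (2:ℕ) > 1),
          Finset.sum_empty, add_zero]
        rw [hrec s (by omega) le_rfl]
        simp [compH]
      · have hstep := ih hn1 (by omega)
        rw [hstep]
        have hsub : Δw (s - n) = G (s - n) + H (s - n) (Δw (s - n - 1)) :=
          hrec (s - n) (by omega) (by omega)
        have e1 : s - n - 1 = s - (n+1) := by omega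
        have : (compH H s n) (Δw (s - n))
            = (compH H s n) (G (s - n)) + (compH H s (n+1)) (Δw (s - (n+1))) := by
          rw [hsub, map_add, e1]
          rfl
        rw [this]
        have hsum : ∑ j ∈ Finset.Icc 2 (n+1), (compH H s (j - 1)) (G (s - j + 1))
            = ∑ j ∈ Finset.Icc 2 n, (compH H s (j - 1)) (G (s - j + 1))
              + (compH H s n) (G (s - (n+1) + 1)) := by
          rw [Finset.sum_Icc_succ_top (by omega : 2 ≤ n + 1)]
          simp
        rw [hsum]
        have : s - (n+1) + 1 = s - n := by omega
        rw [this]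
        abel
  have hid := hkey k hk1 hks
  have herr : Δw s - (G s + ∑ j ∈ Finset.Icc 2 k, (compH H s (j - 1)) (G (s - j + 1)))
      = (compH H s k) (Δw (s - k)) := by
    rw [hid]; abel
  constructor
  · rw [herr]
    calc ‖(compH H s k) (Δw (s - k))‖ ≤ ‖compH H s k‖ * ‖Δw (s - k)‖ :=
          (compH H s k).le_opNorm _
      _ ≤ r ^ k * (M * (1 - r ^ (s - k)) / (1 - r)) := by
          apply mul_le_mul (compH_norm r hr0 s H hH k hks)
            (hbound (s - k) (by omega)) (norm_nonneg _) (pow_nonneg hr0 k)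
  · have h1 : 1 - r ^ (s - k) ≤ 1 := by
      have := pow_nonneg hr0 (s - k); linarith
    have e2 : M * r ^ k / (1 - r) = r ^ k * (M * 1 / (1 - r)) := by ring
    rw [e2]
    gcongr
end
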